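/- arXiv:1509.06308 — 2 statements merged into one kernel-verified Lean document; each statement's English description precedes it below -/
import Mathlib

section
/- For every N ∈ ℕ, ν ∈ ℝ and every real z > 0, F_ν^{N+2}(z) = (d²/dz²)F_ν^N(z) + (1/z)·(d/dz)F_ν^N(z) − (ν²/z²)·F_ν^N(z), where the derivatives are taken with respect to z on (0,∞). -/
open Real MeasureTheory

/-- The modified Bessel function of the second kind, for `z > 0` and real order `ν`. -/
noncomputable def besselK (ν z : ℝ) : ℝ :=
  ∫ t in Set.Ioi (0 : ℝ), Real.exp (-z * Real.cosh t) * Real.cosh (ν * t)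

/-- `F_ν^N(z) = ∫_0^∞ cosh^N(t) K_ν(z cosh t) dt`. -/
noncomputable def F (N : ℕ) (ν : ℝ) (z : ℝ) : ℝ :=
  ∫ t in Set.Ioi (0 : ℝ), Real.cosh t ^ N * besselK ν (z * Real.cosh t)

/-!
Writing `F_ν^N(z) = ∫∫ cosh^N t · cosh(ν s) · exp(-z cosh t cosh s) ds dt` over the quadrant,
each derivative in `z` brings down the factor `-cosh t cosh s`, so the right-hand side becomes
`∫ cosh^{N+2} t · (K'' + K'/a - ν²/a² · K)(a) dt` at `a = z cosh t`. Bessel's equation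
`K'' + K'/a = (1 + ν²/a²) K` turns the bracket into `K(a)`; it follows from integrating by parts
in the integral representation of `K_ν`.
-/

open Set Filter Topology Asymptotics Metric

namespace Real

lemma cosh_le_exp_abs (x : ℝ) : cosh x ≤ exp |x| := by
  rw [← cosh_abs, cosh_eq]
  linarith [exp_le_exp.2 (neg_le_self (abs_nonneg x))]

lemma abs_sinh_le_cosh (x : ℝ) : |sinh x| ≤ cosh x := by
  rw [abs_sinh, ← cosh_abs x]
  exact (sinh_lt_cosh _).le

lemma cosh_pow_le_exp (k : ℕ) {s : ℝ} (hs : 0 ≤ s) : cosh s ^ k ≤ exp (k * s) := by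
  rw [exp_nat_mul]
  gcongr
  simpa [abs_of_nonneg hs] using cosh_le_exp_abs s

lemma cosh_mul_le_exp (ν : ℝ) {s : ℝ} (hs : 0 ≤ s) : cosh (ν * s) ≤ exp (|ν| * s) := by
  simpa [abs_mul, abs_of_nonneg hs] using cosh_le_exp_abs (ν * s)

lemma tendsto_exp_mul_sub_mul_cosh_atTop (b : ℝ) {c : ℝ} (hc : 0 < c) :
    Tendsto (fun t => exp (b * t - c * cosh t)) atTop (𝓝 0) := by
  have h := (tendsto_rpow_mul_exp_neg_mul_atTop_nhds_zero b (c / 2) (half_pos hc)).comp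
    tendsto_exp_atTop
  refine squeeze_zero (fun t => (exp_pos _).le) (fun t => ?_) h
  have : exp t / 2 ≤ cosh t := by rw [cosh_eq]; linarith [exp_pos (-t)]
  rw [Function.comp_apply, rpow_def_of_pos (exp_pos t), log_exp, ← exp_add]
  gcongr
  nlinarith

lemma integrableOn_exp_mul_sub_mul_cosh (b : ℝ) {c : ℝ} (hc : 0 < c) :
    IntegrableOn (fun t => exp (b * t - c * cosh t)) (Ioi 0) := by
  refine integrable_of_isBigO_exp_neg one_pos (by fun_prop) ?_
  have h := (tendsto_exp_mul_sub_mul_cosh_atTop (b + 1) hc).isBigO_one ℝ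
  refine ((h.mul (isBigO_refl (fun t => exp (-1 * t)) atTop)).congr (fun t => ?_) (fun t => ?_))
  · rw [← exp_add]; ring_nf
  · exact one_mul _

end Real

lemma derivWithin_eq_of_eqOn_of_hasDerivAt {f g : ℝ → ℝ} {s : Set ℝ} {g' x : ℝ} (hs : IsOpen s)
    (hfg : EqOn f g s) (hg : HasDerivAt g g' x) (hx : x ∈ s) : derivWithin f s x = g' :=
  (hg.hasDerivWithinAt.congr hfg (hfg hx)).derivWithin (hs.uniqueDiffWithinAt hx)

-- `besselKMoment ν k = (-1)^k K_ν^{(k)}`, by differentiating under the integral sign.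
noncomputable def besselKIntegrand (ν : ℝ) (k : ℕ) (a s : ℝ) : ℝ :=
  cosh s ^ k * cosh (ν * s) * exp (-(a * cosh s))

noncomputable def besselKMoment (ν : ℝ) (k : ℕ) (a : ℝ) : ℝ :=
  ∫ s in Ioi 0, besselKIntegrand ν k a s

noncomputable def besselKPrimitive (ν a s : ℝ) : ℝ :=
  -(sinh s * cosh (ν * s) / a + ν * sinh (ν * s) / a ^ 2) * exp (-(a * cosh s))

section BesselKMoment

variable (ν : ℝ) (k : ℕ) {a : ℝ}

lemma besselKIntegrand_nonneg (a s : ℝ) : 0 ≤ besselKIntegrand ν k a s := by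
  unfold besselKIntegrand; positivity

lemma besselKIntegrand_le_exp {s : ℝ} (hs : 0 ≤ s) :
    besselKIntegrand ν k a s ≤ exp ((k + |ν|) * s - a * cosh s) := by
  rw [sub_eq_add_neg, add_mul, exp_add, exp_add, besselKIntegrand]
  gcongr
  · exact cosh_pow_le_exp k hs
  · exact cosh_mul_le_exp ν hs

lemma tendsto_besselKIntegrand_atTop (ha : 0 < a) :
    Tendsto (besselKIntegrand ν k a) atTop (𝓝 0) :=
  squeeze_zero' (Eventually.of_forall (besselKIntegrand_nonneg ν k a))
    ((eventually_ge_atTop 0).mono fun _ hs => besselKIntegrand_le_exp ν k hs)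
    (tendsto_exp_mul_sub_mul_cosh_atTop _ ha)

lemma integrableOn_besselKIntegrand (ha : 0 < a) :
    IntegrableOn (besselKIntegrand ν k a) (Ioi 0) := by
  refine (integrableOn_exp_mul_sub_mul_cosh ((k : ℝ) + |ν|) ha).mono'
    (by unfold besselKIntegrand; fun_prop) ?_
  refine ae_restrict_of_forall_mem measurableSet_Ioi fun s hs => ?_
  rw [norm_of_nonneg (besselKIntegrand_nonneg ν k a s)]
  exact besselKIntegrand_le_exp ν k (le_of_lt hs)

lemma hasDerivAt_besselKIntegrand (a s : ℝ) :
    HasDerivAt (fun a => besselKIntegrand ν k a s) (-besselKIntegrand ν (k + 1) a s) a := by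
  have h := (((hasDerivAt_id a).mul_const (cosh s)).neg.exp).const_mul (cosh s ^ k * cosh (ν * s))
  refine h.congr_deriv ?_
  simp only [besselKIntegrand, id, Pi.neg_apply]
  ring

lemma hasDerivAt_besselKPrimitive (ha : a ≠ 0) (s : ℝ) :
    HasDerivAt (besselKPrimitive ν a)
      (besselKIntegrand ν 2 a s - (1 + ν ^ 2 / a ^ 2) * besselKIntegrand ν 0 a s
        - a⁻¹ * besselKIntegrand ν 1 a s) s := by
  have hνs := (hasDerivAt_id s).const_mul ν
  have h := ((((hasDerivAt_sinh s).mul hνs.cosh).div_const a).add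
    ((hνs.sinh.const_mul ν).div_const (a ^ 2))).neg.mul ((hasDerivAt_cosh s).const_mul a).neg.exp
  refine h.congr_deriv ?_
  simp only [besselKIntegrand, id, Pi.neg_apply, Pi.add_apply, Pi.mul_apply]
  field_simp
  linear_combination a ^ 2 * cosh (ν * s) * sinh_sq s

lemma tendsto_besselKPrimitive_atTop (ha : 0 < a) :
    Tendsto (besselKPrimitive ν a) atTop (𝓝 0) := by
  have h := ((tendsto_besselKIntegrand_atTop ν 1 ha).const_mul a⁻¹).add
    ((tendsto_besselKIntegrand_atTop ν 0 ha).const_mul (|ν| / a ^ 2))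
  rw [mul_zero, mul_zero, add_zero] at h
  refine squeeze_zero_norm (fun s => ?_) h
  have hsinh : |sinh s * cosh (ν * s)| ≤ cosh s * cosh (ν * s) := by
    rw [abs_mul, abs_of_pos (cosh_pos _)]
    gcongr
    exact abs_sinh_le_cosh s
  have hsinhν : |ν * sinh (ν * s)| ≤ |ν| * cosh (ν * s) := by
    rw [abs_mul]
    gcongr
    exact abs_sinh_le_cosh _
  rw [besselKPrimitive, norm_mul, norm_neg, norm_of_nonneg (exp_pos _).le, Real.norm_eq_abs]
  calc |sinh s * cosh (ν * s) / a + ν * sinh (ν * s) / a ^ 2| * exp (-(a * cosh s))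
      ≤ (|sinh s * cosh (ν * s)| / a + |ν * sinh (ν * s)| / a ^ 2) * exp (-(a * cosh s)) := by
        gcongr
        refine (abs_add_le _ _).trans_eq ?_
        rw [abs_div, abs_div, abs_of_pos ha, abs_of_pos (by positivity : (0 : ℝ) < a ^ 2)]
    _ ≤ (cosh s * cosh (ν * s) / a + |ν| * cosh (ν * s) / a ^ 2) * exp (-(a * cosh s)) := by
        gcongr
    _ = _ := by simp only [besselKIntegrand]; ring

-- Bessel's equation `K'' + K'/a = (1 + ν²/a²) K` for `K = K_ν`.
theorem besselKMoment_two (ha : 0 < a) :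
    besselKMoment ν 2 a = (1 + ν ^ 2 / a ^ 2) * besselKMoment ν 0 a + a⁻¹ * besselKMoment ν 1 a := by
  have hint (k : ℕ) := integrableOn_besselKIntegrand ν k ha
  have h := integral_Ioi_of_hasDerivAt_of_tendsto'
    (fun s _ => hasDerivAt_besselKPrimitive ν ha.ne' s)
    (((hint 2).sub ((hint 0).const_mul _)).sub ((hint 1).const_mul _))
    (tendsto_besselKPrimitive_atTop ν ha)
  rw [integral_sub, integral_sub, integral_const_mul, integral_const_mul] at h
  rotate_left
  · exact hint 2
  · exact (hint 0).const_mul _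
  · exact (hint 2).sub ((hint 0).const_mul _)
  · exact (hint 1).const_mul _
  simp only [besselKPrimitive, sinh_zero, mul_zero, zero_mul, zero_div, add_zero, neg_zero,
    sub_zero] at h
  unfold besselKMoment
  linarith

end BesselKMoment

local notation "μ₂" => Measure.prod (volume.restrict (Ioi (0 : ℝ))) (volume.restrict (Ioi (0 : ℝ)))

noncomputable def doubleMoment (ν : ℝ) (i j : ℕ) (z : ℝ) : ℝ :=
  ∫ p : ℝ × ℝ, cosh p.1 ^ i * besselKIntegrand ν j (z * cosh p.1) p.2 ∂μ₂

section DoubleMoment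

variable (ν : ℝ) (i j : ℕ) {z : ℝ}

lemma continuous_doubleMomentIntegrand (w : ℝ) :
    Continuous fun p : ℝ × ℝ => cosh p.1 ^ i * besselKIntegrand ν j (w * cosh p.1) p.2 := by
  unfold besselKIntegrand; fun_prop

lemma cosh_pow_mul_besselKIntegrand_le {c w t s : ℝ} (hc : 0 ≤ c) (hw : c ≤ w) (ht : 0 ≤ t)
    (hs : 0 ≤ s) :
    cosh t ^ i * besselKIntegrand ν j (w * cosh t) s
      ≤ exp (i * t - c / 2 * cosh t) * exp ((j + |ν|) * s - c / 2 * cosh s) := by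
  have hprod : c / 2 * cosh t + c / 2 * cosh s ≤ w * cosh t * cosh s := by
    have h1 := one_le_cosh t
    have h2 := one_le_cosh s
    nlinarith [mul_nonneg (sub_nonneg.2 h1) (sub_nonneg.2 h2),
      mul_le_mul_of_nonneg_right hw (by positivity : 0 ≤ cosh t * cosh s)]
  calc cosh t ^ i * besselKIntegrand ν j (w * cosh t) s
      ≤ exp (i * t) * exp ((j + |ν|) * s - w * cosh t * cosh s) :=
        mul_le_mul (cosh_pow_le_exp i ht) (besselKIntegrand_le_exp ν j hs)
          (besselKIntegrand_nonneg ν j _ s) (exp_pos _).le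
    _ ≤ _ := by
        rw [← exp_add, ← exp_add]
        exact exp_le_exp.2 (by linarith)

lemma exists_integrable_bound_doubleMomentIntegrand {c : ℝ} (hc : 0 < c) :
    ∃ bound : ℝ × ℝ → ℝ, Integrable bound μ₂ ∧ ∀ᵐ p ∂μ₂, ∀ w, c ≤ w →
      ‖cosh p.1 ^ i * besselKIntegrand ν j (w * cosh p.1) p.2‖ ≤ bound p := by
  refine ⟨fun p => exp (i * p.1 - c / 2 * cosh p.1) * exp ((j + |ν|) * p.2 - c / 2 * cosh p.2),
    (integrableOn_exp_mul_sub_mul_cosh _ (half_pos hc)).mul_prod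
      (integrableOn_exp_mul_sub_mul_cosh _ (half_pos hc)), ?_⟩
  rw [Measure.prod_restrict]
  filter_upwards [ae_restrict_mem (measurableSet_Ioi.prod measurableSet_Ioi)] with p hp w hw
  rw [norm_of_nonneg (mul_nonneg (by positivity) (besselKIntegrand_nonneg ν j _ _))]
  exact cosh_pow_mul_besselKIntegrand_le ν i j hc.le hw (le_of_lt hp.1) (le_of_lt hp.2)

lemma integrable_doubleMomentIntegrand (hz : 0 < z) :
    Integrable (fun p : ℝ × ℝ => cosh p.1 ^ i * besselKIntegrand ν j (z * cosh p.1) p.2) μ₂ := by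
  obtain ⟨bound, hint, hle⟩ := exists_integrable_bound_doubleMomentIntegrand ν i j hz
  exact hint.mono' (continuous_doubleMomentIntegrand ν i j z).aestronglyMeasurable
    (hle.mono fun p hp => hp z le_rfl)

lemma hasDerivAt_doubleMoment (hz : 0 < z) :
    HasDerivAt (doubleMoment ν i j) (-doubleMoment ν (i + 1) (j + 1) z) z := by
  obtain ⟨bound, hint, hle⟩ :=
    exists_integrable_bound_doubleMomentIntegrand ν (i + 1) (j + 1) (half_pos hz)
  have hdiff (t s w : ℝ) : HasDerivAt (fun w => cosh t ^ i * besselKIntegrand ν j (w * cosh t) s)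
      (-(cosh t ^ (i + 1) * besselKIntegrand ν (j + 1) (w * cosh t) s)) w := by
    refine (((hasDerivAt_besselKIntegrand ν j _ s).comp w
      ((hasDerivAt_id w).mul_const (cosh t))).const_mul (cosh t ^ i)).congr_deriv ?_
    simp only [id]
    ring
  have h := hasDerivAt_integral_of_dominated_loc_of_deriv_le (μ := μ₂)
    (F := fun w p => cosh p.1 ^ i * besselKIntegrand ν j (w * cosh p.1) p.2)
    (F' := fun w p => -(cosh p.1 ^ (i + 1) * besselKIntegrand ν (j + 1) (w * cosh p.1) p.2))
    (ball_mem_nhds z (half_pos hz))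
    (Eventually.of_forall fun w => (continuous_doubleMomentIntegrand ν i j w).aestronglyMeasurable)
    (integrable_doubleMomentIntegrand ν i j hz)
    (continuous_doubleMomentIntegrand ν (i + 1) (j + 1) z).neg.aestronglyMeasurable
    (hle.mono fun p hp w hw => by
      rw [norm_neg]
      refine hp w ?_
      rw [mem_ball, dist_eq, abs_lt] at hw
      linarith)
    hint (ae_of_all _ fun p w _ => hdiff p.1 p.2 w)
  rw [doubleMoment, ← integral_neg]
  exact h.2

lemma doubleMoment_eq_integral (hz : 0 < z) :
    doubleMoment ν i j z = ∫ t in Ioi 0, cosh t ^ i * besselKMoment ν j (z * cosh t) := by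
  rw [doubleMoment, integral_prod _ (integrable_doubleMomentIntegrand ν i j hz)]
  simp only [besselKMoment, integral_const_mul]

lemma integrableOn_cosh_pow_mul_besselKMoment (hz : 0 < z) :
    IntegrableOn (fun t => cosh t ^ i * besselKMoment ν j (z * cosh t)) (Ioi 0) := by
  refine (integrable_doubleMomentIntegrand ν i j hz).integral_prod_left.congr
    (ae_of_all _ fun t => ?_)
  exact integral_const_mul (cosh t ^ i) _

end DoubleMoment

lemma besselK_eq_besselKMoment_zero (ν a : ℝ) : besselK ν a = besselKMoment ν 0 a := by
  unfold besselK besselKMoment besselKIntegrand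
  congr 1 with s
  rw [pow_zero, one_mul, neg_mul, mul_comm]

lemma F_eq_doubleMoment (N : ℕ) (ν : ℝ) {z : ℝ} (hz : 0 < z) :
    F N ν z = doubleMoment ν N 0 z := by
  simp only [F, besselK_eq_besselKMoment_zero, doubleMoment_eq_integral ν N 0 hz]

lemma doubleMoment_recursion (N : ℕ) (ν : ℝ) {z : ℝ} (hz : 0 < z) :
    doubleMoment ν (N + 2) 0 z = doubleMoment ν (N + 2) 2 z - z⁻¹ * doubleMoment ν (N + 1) 1 z
      - ν ^ 2 / z ^ 2 * doubleMoment ν N 0 z := by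
  have hI (i j : ℕ) := integrableOn_cosh_pow_mul_besselKMoment ν i j hz
  simp only [doubleMoment_eq_integral ν _ _ hz]
  rw [← integral_const_mul, ← integral_const_mul, ← integral_sub, ← integral_sub]
  rotate_left
  · exact (hI _ _).sub ((hI _ _).const_mul _)
  · exact (hI _ _).const_mul _
  · exact hI _ _
  · exact (hI _ _).const_mul _
  refine setIntegral_congr_fun measurableSet_Ioi fun t _ => ?_
  have ha : 0 < z * cosh t := mul_pos hz (cosh_pos t)
  simp only [besselKMoment_two ν ha]
  field_simp
  ring

theorem F_recursion (N : ℕ) (ν : ℝ) (z : ℝ) (hz : 0 < z) :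
    F (N + 2) ν z =
      derivWithin (derivWithin (F N ν) (Set.Ioi 0)) (Set.Ioi 0) z
        + z⁻¹ * derivWithin (F N ν) (Set.Ioi 0) z
        - ν ^ 2 / z ^ 2 * F N ν z := by
  have hF : EqOn (F N ν) (doubleMoment ν N 0) (Ioi 0) := fun w hw => F_eq_doubleMoment N ν hw
  have hF' : EqOn (derivWithin (F N ν) (Ioi 0)) (fun w => -doubleMoment ν (N + 1) 1 w) (Ioi 0) :=
    fun w hw => derivWithin_eq_of_eqOn_of_hasDerivAt isOpen_Ioi hF
      (hasDerivAt_doubleMoment ν N 0 hw) hw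
  have hF'' : derivWithin (derivWithin (F N ν) (Ioi 0)) (Ioi 0) z = doubleMoment ν (N + 2) 2 z :=
    (derivWithin_eq_of_eqOn_of_hasDerivAt isOpen_Ioi hF'
      (hasDerivAt_doubleMoment ν (N + 1) 1 hz).neg hz).trans (neg_neg _)
  rw [hF'', hF' hz, hF hz, F_eq_doubleMoment _ ν hz, doubleMoment_recursion N ν hz]
  ring
end

section
/- For every real z > 0: G_1^3(z) = (1/4)·z^{−1}·K_0(z/2)² + 2·z^{−2}·K_0(z/2)·K_1(z/2) + (1/4 + 4·z^{−2})·z^{−1}·K_1(z/2)², and G_1^5(z) = (1/4 + 6·z^{−2})·z^{−1}·K_0(z/2)² + (7/2 + 48·z^{−2})·z^{−2}·K_0(z/2)·K_1(z/2) + (1/4 + 10·z^{−2} + 96·z^{−4})·z^{−1}·K_1(z/2)². -/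
open Real MeasureTheory

/-- `G_ν^N(z) = ∫_0^∞ cosh^N(t) K_ν(z cosh t) sinh²(t) dt`. -/
noncomputable def G (N : ℕ) (ν : ℝ) (z : ℝ) : ℝ :=
  ∫ t in Set.Ioi (0 : ℝ),
    Real.cosh t ^ N * besselK ν (z * Real.cosh t) * Real.sinh t ^ 2

/-!
Write `2 K_ν(z) = ∫_ℝ exp(ν t - z cosh t) dt`. The convolution of two such kernels, after the
substitution `t = x/2 + w` and `cosh(x/2 + w) + cosh(x/2 - w) = 2 cosh(x/2) cosh w`, gives the
product formula `K_μ(z) K_ν(z) = 2 ∫_0^∞ K_{μ-ν}(2z cosh v) cosh((μ+ν) v) dv`. Expanding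
`cosh^N t sinh² t` into `cosh((2k+1) t)` turns `G_1^N(z)` into a combination of the products
`K_{k+1}(z/2) K_k(z/2)`, and the recurrence `K_{ν+1} = K_{ν-1} + (2ν/x) K_ν` (integration by parts
of `d/dt exp(ν t - x cosh t)`) reduces these to `K_0(z/2)` and `K_1(z/2)`.
-/

open Set
open scoped Convolution

lemma one_add_sq_div_two_le_cosh (t : ℝ) : 1 + t ^ 2 / 2 ≤ cosh t := by
  have hcosh : cosh t = 1 + 2 * sinh (t / 2) ^ 2 := by
    rw [← mul_div_cancel₀ t two_ne_zero, cosh_two_mul, cosh_sq, mul_div_cancel_left₀ _ two_ne_zero]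
    ring
  have hsinh : (t / 2) ^ 2 ≤ sinh (t / 2) ^ 2 := by
    rcases le_total 0 (t / 2) with h | h
    · nlinarith [self_le_sinh_iff.mpr h]
    · nlinarith [sinh_le_self_iff.mpr h, sinh_nonpos_iff.mpr h]
  nlinarith

lemma integrable_exp_mul_sub_mul_cosh {a : ℝ} (ha : 0 < a) (b : ℝ) :
    Integrable fun t ↦ exp (b * t - a * cosh t) := by
  have hgauss : Integrable fun t ↦ exp (b ^ 2 / (2 * a) - a) * exp (-(a / 2) * (t - b / a) ^ 2) :=
    ((integrable_exp_neg_mul_sq (half_pos ha)).comp_sub_right (b / a)).const_mul _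
  refine hgauss.mono' (by fun_prop) (ae_of_all _ fun t ↦ ?_)
  rw [norm_of_nonneg (exp_nonneg _), ← exp_add, exp_le_exp]
  have hsq : b * t - a * (1 + t ^ 2 / 2) = b ^ 2 / (2 * a) - a + -(a / 2) * (t - b / a) ^ 2 := by
    field_simp
    ring
  nlinarith [mul_le_mul_of_nonneg_left (one_add_sq_div_two_le_cosh t) ha.le]

lemma integral_eq_integral_Ioi_add_comp_neg {ψ : ℝ → ℝ} (hψ : Integrable ψ) :
    ∫ v, ψ v = ∫ v in Ioi 0, (ψ v + ψ (-v)) := by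
  have hneg : ∫ v in Iic 0, ψ v = ∫ v in Ioi 0, ψ (-v) := by
    simp [integral_comp_neg_Ioi]
  rw [← intervalIntegral.integral_Iic_add_Ioi hψ.integrableOn hψ.integrableOn, hneg,
    ← integral_add hψ.comp_neg.integrableOn hψ.integrableOn]
  simp only [add_comm]

lemma integral_exp_mul_sub_mul_cosh {z : ℝ} (hz : 0 < z) (ν : ℝ) :
    ∫ t, exp (ν * t - z * cosh t) = 2 * besselK ν z := by
  rw [integral_eq_integral_Ioi_add_comp_neg (integrable_exp_mul_sub_mul_cosh hz ν), besselK,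
    ← integral_const_mul]
  refine setIntegral_congr_fun measurableSet_Ioi fun t _ ↦ ?_
  simp only [cosh_neg, mul_neg, neg_mul, sub_eq_neg_add, exp_add, cosh_eq (ν * t)]
  ring

lemma besselK_add_one {x : ℝ} (hx : 0 < x) (ν : ℝ) :
    besselK (ν + 1) x = besselK (ν - 1) x + 2 * ν / x * besselK ν x := by
  have hint := integrable_exp_mul_sub_mul_cosh hx
  have hint' : Integrable fun t ↦
      exp ((ν + 1) * t - x * cosh t) - exp ((ν - 1) * t - x * cosh t) :=
    (hint _).sub (hint _)
  have hderiv : ∀ t, HasDerivAt (fun t ↦ exp (ν * t - x * cosh t))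
      (ν * exp (ν * t - x * cosh t)
        - x / 2 * (exp ((ν + 1) * t - x * cosh t) - exp ((ν - 1) * t - x * cosh t))) t := by
    intro t
    have hexponent : HasDerivAt (fun t ↦ ν * t - x * cosh t) (ν - x * sinh t) t :=
      (hasDerivAt_const_mul ν).sub ((hasDerivAt_cosh t).const_mul x)
    convert hexponent.exp using 1
    rw [show (ν + 1) * t - x * cosh t = ν * t - x * cosh t + t by ring,
      show (ν - 1) * t - x * cosh t = ν * t - x * cosh t + -t by ring, exp_add, exp_add, sinh_eq]
    ring
  have hzero := integral_eq_zero_of_hasDerivAt_of_integrable hderiv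
    (((hint ν).const_mul ν).sub (hint'.const_mul _)) (hint ν)
  rw [integral_sub ((hint ν).const_mul ν) (hint'.const_mul _), integral_const_mul,
    integral_const_mul, integral_sub (hint _) (hint _)] at hzero
  simp only [integral_exp_mul_sub_mul_cosh hx] at hzero
  field_simp
  linear_combination -hzero

lemma convolution_exp_mul_sub_mul_cosh {z : ℝ} (hz : 0 < z) (μ ν x : ℝ) :
    ((fun t ↦ exp (μ * t - z * cosh t)) ⋆[ContinuousLinearMap.mul ℝ ℝ]
        fun t ↦ exp (ν * t - z * cosh t)) x
      = 2 * (exp ((μ + ν) * (x / 2)) * besselK (μ - ν) (2 * z * cosh (x / 2))) := by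
  have hz' : 0 < 2 * z * cosh (x / 2) := by positivity
  rw [convolution_mul, ← integral_add_right_eq_self _ (x / 2), mul_left_comm,
    ← integral_exp_mul_sub_mul_cosh hz' (μ - ν), ← integral_const_mul]
  refine integral_congr_ae (ae_of_all _ fun w ↦ ?_)
  simp only [← exp_add]
  congr 1
  rw [show x - (w + x / 2) = x / 2 - w by ring, cosh_add, cosh_sub]
  ring

lemma integrable_exp_mul_mul_besselK {z : ℝ} (hz : 0 < z) (μ ν : ℝ) :
    Integrable fun v ↦ exp ((μ + ν) * v) * besselK (μ - ν) (2 * z * cosh v) := by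
  have hconv := (integrable_exp_mul_sub_mul_cosh hz μ).integrable_convolution
    (ContinuousLinearMap.mul ℝ ℝ) (integrable_exp_mul_sub_mul_cosh hz ν)
  refine ((hconv.comp_mul_left' two_ne_zero).const_mul 2⁻¹).congr (ae_of_all _ fun v ↦ ?_)
  simp only [convolution_exp_mul_sub_mul_cosh hz, mul_div_cancel_left₀ v (two_ne_zero' ℝ),
    inv_mul_cancel_left₀ (two_ne_zero' ℝ)]

lemma besselK_mul_besselK_eq_integral {z : ℝ} (hz : 0 < z) (μ ν : ℝ) :
    besselK μ z * besselK ν z = ∫ v, exp ((μ + ν) * v) * besselK (μ - ν) (2 * z * cosh v) := by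
  have hconv := integral_convolution (ContinuousLinearMap.mul ℝ ℝ)
    (integrable_exp_mul_sub_mul_cosh hz μ) (integrable_exp_mul_sub_mul_cosh hz ν)
  simp only [convolution_exp_mul_sub_mul_cosh hz, integral_exp_mul_sub_mul_cosh hz,
    ContinuousLinearMap.mul_apply', integral_const_mul,
    Measure.integral_comp_div (fun v ↦ exp ((μ + ν) * v) * besselK (μ - ν) (2 * z * cosh v)),
    abs_two, smul_eq_mul] at hconv
  linarith

lemma besselK_mul_besselK {z : ℝ} (hz : 0 < z) (μ ν : ℝ) :
    besselK μ z * besselK ν z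
      = 2 * ∫ v in Ioi 0, besselK (μ - ν) (2 * z * cosh v) * cosh ((μ + ν) * v) := by
  rw [besselK_mul_besselK_eq_integral hz,
    integral_eq_integral_Ioi_add_comp_neg (integrable_exp_mul_mul_besselK hz μ ν),
    ← integral_const_mul]
  refine setIntegral_congr_fun measurableSet_Ioi fun v _ ↦ ?_
  rw [cosh_neg, mul_neg, cosh_eq ((μ + ν) * v)]
  ring

lemma integrableOn_besselK_mul_cosh {z : ℝ} (hz : 0 < z) (μ ν : ℝ) :
    IntegrableOn (fun v ↦ besselK (μ - ν) (2 * z * cosh v) * cosh ((μ + ν) * v)) (Ioi 0) := by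
  have hint := integrable_exp_mul_mul_besselK hz μ ν
  refine ((hint.add hint.comp_neg).const_mul 2⁻¹).integrableOn.congr_fun (fun v _ ↦ ?_)
    measurableSet_Ioi
  simp only [Pi.add_apply, cosh_neg, mul_neg, cosh_eq ((μ + ν) * v)]
  ring

lemma integral_besselK_one_mul_cosh {z : ℝ} (hz : 0 < z) (m : ℝ) :
    ∫ v in Ioi 0, besselK 1 (z * cosh v) * cosh ((2 * m + 1) * v)
      = besselK (m + 1) (z / 2) * besselK m (z / 2) / 2 := by
  rw [besselK_mul_besselK (half_pos hz), add_sub_cancel_left, mul_div_cancel₀ z two_ne_zero,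
    show m + 1 + m = 2 * m + 1 by ring, mul_div_cancel_left₀ _ two_ne_zero]

lemma G_one_eq_sum {z : ℝ} (hz : 0 < z) {N n : ℕ} (c : Fin n → ℝ)
    (hc : ∀ t, cosh t ^ N * sinh t ^ 2 = ∑ k, c k * cosh ((2 * k + 1) * t)) :
    G N 1 z = ∑ k, c k * (besselK (k + 1) (z / 2) * besselK k (z / 2) / 2) := by
  have hint : ∀ m : ℝ, IntegrableOn (fun v ↦ besselK 1 (z * cosh v) * cosh ((2 * m + 1) * v))
      (Ioi 0) := fun m ↦ by
    simpa [add_right_comm, ← two_mul, mul_div_cancel₀ z two_ne_zero]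
      using integrableOn_besselK_mul_cosh (half_pos hz) (m + 1) m
  simp_rw [G, ← integral_besselK_one_mul_cosh hz, ← integral_const_mul]
  rw [← integral_finsetSum _ fun (k : Fin n) _ ↦ (hint k).const_mul (c k)]
  refine setIntegral_congr_fun measurableSet_Ioi fun t _ ↦ ?_
  rw [mul_right_comm, hc, Finset.sum_mul]
  exact Finset.sum_congr rfl fun _ _ ↦ by ring

lemma cosh_pow_three_mul_sinh_sq (t : ℝ) :
    cosh t ^ 3 * sinh t ^ 2 = (cosh (5 * t) + cosh (3 * t) - 2 * cosh t) / 16 := by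
  have h5 : exp (5 * t) = exp t ^ 5 := by rw [← exp_nat_mul]; norm_num
  have h3 : exp (3 * t) = exp t ^ 3 := by rw [← exp_nat_mul]; norm_num
  simp only [cosh_eq, sinh_eq, exp_neg, h5, h3]
  field_simp
  ring

lemma cosh_pow_five_mul_sinh_sq (t : ℝ) :
    cosh t ^ 5 * sinh t ^ 2
      = (cosh (7 * t) + 3 * cosh (5 * t) + cosh (3 * t) - 5 * cosh t) / 64 := by
  have h7 : exp (7 * t) = exp t ^ 7 := by rw [← exp_nat_mul]; norm_num
  have h5 : exp (5 * t) = exp t ^ 5 := by rw [← exp_nat_mul]; norm_num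
  have h3 : exp (3 * t) = exp t ^ 3 := by rw [← exp_nat_mul]; norm_num
  simp only [cosh_eq, sinh_eq, exp_neg, h7, h5, h3]
  field_simp
  ring

theorem G_exact_formulas (z : ℝ) (hz : 0 < z) :
    G 3 1 z =
      1 / 4 * z⁻¹ * besselK 0 (z / 2) ^ 2
        + 2 * (z ^ 2)⁻¹ * besselK 0 (z / 2) * besselK 1 (z / 2)
        + (1 / 4 + 4 * (z ^ 2)⁻¹) * z⁻¹ * besselK 1 (z / 2) ^ 2 ∧
    G 5 1 z =
      (1 / 4 + 6 * (z ^ 2)⁻¹) * z⁻¹ * besselK 0 (z / 2) ^ 2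
        + (7 / 2 + 48 * (z ^ 2)⁻¹) * (z ^ 2)⁻¹ * besselK 0 (z / 2) * besselK 1 (z / 2)
        + (1 / 4 + 10 * (z ^ 2)⁻¹ + 96 * (z ^ 4)⁻¹) * z⁻¹ * besselK 1 (z / 2) ^ 2 := by
  have hK2 := besselK_add_one (half_pos hz) 1
  have hK3 := besselK_add_one (half_pos hz) 2
  have hK4 := besselK_add_one (half_pos hz) 3
  norm_num at hK2 hK3 hK4
  rw [G_one_eq_sum hz ![-1 / 8, 1 / 16, 1 / 16] fun t ↦ by
      norm_num [Fin.sum_univ_succ, cosh_pow_three_mul_sinh_sq]; ring,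
    G_one_eq_sum hz ![-5 / 64, 1 / 64, 3 / 64, 1 / 64] fun t ↦ by
      norm_num [Fin.sum_univ_succ, cosh_pow_five_mul_sinh_sq]; ring]
  norm_num [Fin.sum_univ_succ, hK4, hK3, hK2]
  constructor <;> field_simp <;> ring
end
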